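/- Let T be an invertible column-stochastic n×n matrix and ψ(C) = ⟨A,C⟩/⟨B,C⟩ with ⟨B,C⟩ > 0 on C_D. If for some γ ∈ R and classifier g it holds that g minimizes the linear noisy-corrected loss, i.e., ⟨(Tᵀ)^{-1}(A − γB), C^{D̃}[g]⟩ = inf_{C̃ ∈ C_{D̃}} ⟨(Tᵀ)^{-1}(A − γB), C̃⟩, then g minimizes ⟨A − γB, C⟩ over C ∈ C_D; moreover ψ(C^D[g]) ≤ γ if and only if inf_{C ∈ C_D} ⟨A − γB, C⟩ ≤ 0. -/

import Mathlib

/-! The adjoint identity `⟨(Tᵀ)⁻¹ X, T C⟩ = ⟨X, C⟩` makes the noise-corrected loss of every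
classifier on the noisy distribution equal its clean loss `⟨A - γB, C⟩`, so both infima range over
the same set of values. Since `⟨B, C⟩ > 0`, `ψ(C) ≤ γ` is the linear condition `⟨A - γB, C⟩ ≤ 0`. -/

/-- Frobenius inner product of matrices. -/
def frob {n : ℕ} (A B : Matrix (Fin n) (Fin n) ℝ) : ℝ := ∑ i, ∑ j, A i j * B i j

open Set

lemma frob_eq_trace {n : ℕ} (A B : Matrix (Fin n) (Fin n) ℝ) :
    frob A B = (A.transpose * B).trace := by
  simp only [frob, Matrix.trace, Matrix.diag, Matrix.mul_apply, Matrix.transpose_apply]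
  exact Finset.sum_comm

lemma frob_mul_right {n : ℕ} (X T C : Matrix (Fin n) (Fin n) ℝ) :
    frob X (T * C) = frob (T.transpose * X) C := by
  rw [frob_eq_trace, frob_eq_trace, Matrix.transpose_mul, Matrix.transpose_transpose,
    Matrix.mul_assoc]

lemma frob_inv_transpose_mul_mul {n : ℕ} {T : Matrix (Fin n) (Fin n) ℝ} (hT : IsUnit T.det)
    (X C : Matrix (Fin n) (Fin n) ℝ) :
    frob ((T.transpose)⁻¹ * X) (T * C) = frob X C := by
  have hTt : IsUnit T.transpose.det := by rwa [Matrix.det_transpose]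
  rw [frob_mul_right, ← Matrix.mul_assoc, Matrix.mul_nonsing_inv _ hTt, Matrix.one_mul]

lemma frob_sub_smul_left {n : ℕ} (A B C : Matrix (Fin n) (Fin n) ℝ) (γ : ℝ) :
    frob (A - γ • B) C = frob A C - γ * frob B C := by
  simp only [frob, Matrix.sub_apply, Matrix.smul_apply, smul_eq_mul, sub_mul,
    Finset.sum_sub_distrib, Finset.mul_sum, mul_assoc]

lemma image_range_eq_of_forall_apply_eq {ι α β δ : Type*} {f : α → δ} {g : β → δ}
    {u : ι → α} {v : ι → β} (h : ∀ i, f (u i) = g (v i)) :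
    f '' range u = g '' range v := by
  rw [← range_comp, ← range_comp]
  exact congrArg range (funext h)

theorem noise_corrected_bisection_step_general
    {n : ℕ} {H : Type*} (T A B : Matrix (Fin n) (Fin n) ℝ) (γ : ℝ)
    (hT : IsUnit T.det)
    (Cclean Cnoisy : H → Matrix (Fin n) (Fin n) ℝ)
    (hrel : ∀ h, Cnoisy h = T * Cclean h)
    (ψ : Matrix (Fin n) (Fin n) ℝ → ℝ) (hψ : ∀ C, ψ C = frob A C / frob B C)
    (hpos : ∀ C ∈ Set.range Cclean, 0 < frob B C)
    (g : H)
    (hopt : frob ((T.transpose)⁻¹ * (A - γ • B)) (Cnoisy g)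
      = sInf ((fun Ct => frob ((T.transpose)⁻¹ * (A - γ • B)) Ct) '' Set.range Cnoisy)) :
    frob (A - γ • B) (Cclean g)
        = sInf ((fun C => frob (A - γ • B) C) '' Set.range Cclean) ∧
      (ψ (Cclean g) ≤ γ ↔
        sInf ((fun C => frob (A - γ • B) C) '' Set.range Cclean) ≤ 0) := by
  have hloss : ∀ h, frob ((T.transpose)⁻¹ * (A - γ • B)) (Cnoisy h)
      = frob (A - γ • B) (Cclean h) := fun h => by
    rw [hrel, frob_inv_transpose_mul_mul hT]
  have hmin : frob (A - γ • B) (Cclean g)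
      = sInf ((fun C => frob (A - γ • B) C) '' Set.range Cclean) := by
    rw [← image_range_eq_of_forall_apply_eq hloss, ← hopt, hloss]
  refine ⟨hmin, ?_⟩
  rw [← hmin, hψ, div_le_iff₀ (hpos _ ⟨g, rfl⟩), frob_sub_smul_left, sub_nonpos]

/-- Correctness of a noise-corrected bisection step: if `g` minimizes the noise-corrected
linear loss `(Tᵀ)⁻¹(A − γB)` over the noisy feasible set, then `g` minimizes `⟨A − γB, ·⟩`
over the clean feasible set, and `ψ(C^D[g]) ≤ γ` iff `inf_{C ∈ C_D} ⟨A − γB, C⟩ ≤ 0`. -/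
theorem noise_corrected_bisection_step
    {n : ℕ} {H : Type*} (T A B : Matrix (Fin n) (Fin n) ℝ) (γ : ℝ)
    (hT : IsUnit T.det)
    (hTnn : ∀ i j, 0 ≤ T i j ∧ T i j ≤ 1) (hTcol : ∀ j, ∑ i, T i j = 1)
    (Cclean Cnoisy : H → Matrix (Fin n) (Fin n) ℝ)
    (hrel : ∀ h, Cnoisy h = T * Cclean h)
    (ψ : Matrix (Fin n) (Fin n) ℝ → ℝ) (hψ : ∀ C, ψ C = frob A C / frob B C)
    (hpos : ∀ C ∈ Set.range Cclean, 0 < frob B C)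
    (g : H)
    (hopt : frob ((T.transpose)⁻¹ * (A - γ • B)) (Cnoisy g)
      = sInf ((fun Ct => frob ((T.transpose)⁻¹ * (A - γ • B)) Ct) '' Set.range Cnoisy)) :
    frob (A - γ • B) (Cclean g)
        = sInf ((fun C => frob (A - γ • B) C) '' Set.range Cclean) ∧
      (ψ (Cclean g) ≤ γ ↔
        sInf ((fun C => frob (A - γ • B) C) '' Set.range Cclean) ≤ 0) :=
  noise_corrected_bisection_step_general T A B γ hT Cclean Cnoisy hrel ψ hψ hpos g hopt
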